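/- (Zone II-1, case I: degenerate ℓ₁-equilibrium) Let Y₁, Y₂, q₁, ρ > 0, define h(x) = (1/q₁)·(Y₁ + Y₂·x/(x + ρ)) for x ≥ 0, and set p₁∞ = (1/(2·q₁))·(Y₁ + Y₂ − ρ·q₁ + √((Y₁ + Y₂ − ρ·q₁)² + 4·ρ·q₁·Y₁)). Then: (i) p₁∞ > 0 and h(p₁∞) = p₁∞; (ii) for every initial value p₀ with Y₁/p₀ + Y₂/(p₀ + ρ) < q₁ (equivalently p₀ > p₁∞), the sequence defined by p_{t+1} = h(p_t) is strictly decreasing and converges monotonically to p₁∞ as t → ∞. -/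

import Mathlib

open Filter

noncomputable section

/-- The downward price-adjustment map for `p₁` in zone II-1 (case `Δp < −ρ`). -/
def hmap (Y1 Y2 q1 ρ x : ℝ) : ℝ := (Y1 + Y2 * (x / (x + ρ))) / q1

/-- The limit price `p₁∞` defining the degenerate ℓ₁-equilibrium. -/
def p1inf (Y1 Y2 q1 ρ : ℝ) : ℝ :=
  (Y1 + Y2 - ρ * q1 + Real.sqrt ((Y1 + Y2 - ρ * q1) ^ 2 + 4 * ρ * q1 * Y1)) / (2 * q1)

open Set Topology

/-!
Write `D(x) = Y₁/x + Y₂/(x + ρ)` for the demand at price `x`. Then `h(x) = x D(x) / q₁`, and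
since `D` is strictly decreasing with `D(p₁∞) = q₁`, the map `h` lies strictly below the diagonal
exactly to the right of `p₁∞`. Being increasing, `h` also maps `(p₁∞, ∞)` into itself, so every
orbit started there decreases and converges; by continuity the limit is a fixed point of `h`,
and the only one it can be is `p₁∞`.
-/

/-- Total demand for good 1 at price `x`: income `Y1` is spent at price `x`, income `Y2` at
price `x + ρ`. -/
def demand (Y1 Y2 ρ x : ℝ) : ℝ := Y1 / x + Y2 / (x + ρ)

theorem strictAnti_and_tendsto_of_lt_self {f : ℝ → ℝ} {L : ℝ} {p : ℕ → ℝ}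
    (hmaps : MapsTo f (Ioi L) (Ioi L)) (hlt : ∀ x ∈ Ioi L, f x < x)
    (hcont : ContinuousOn f (Ioi L)) (hp0 : p 0 ∈ Ioi L) (hrec : ∀ t, p (t + 1) = f (p t)) :
    StrictAnti p ∧ Tendsto p atTop (𝓝 L) := by
  have hmem : ∀ t, p t ∈ Ioi L := fun t => by
    induction t with
    | zero => exact hp0
    | succ t ih => exact hrec t ▸ hmaps ih
  have hanti : StrictAnti p := strictAnti_nat_of_succ_lt fun t => hrec t ▸ hlt _ (hmem t)
  refine ⟨hanti, ?_⟩
  have hbdd : BddBelow (range p) := ⟨L, forall_mem_range.2 fun t => (hmem t).out.le⟩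
  have hlim := tendsto_atTop_ciInf hanti.antitone hbdd
  set ℓ := ⨅ t, p t
  obtain hLℓ | hLℓ := (le_ciInf fun t => (hmem t).out.le : L ≤ ℓ).eq_or_lt
  · exact hLℓ ▸ hlim
  -- otherwise `ℓ` would be a fixed point of `f` above `L`
  have hfix : f ℓ = ℓ := by
    have hshift : Tendsto (fun t => f (p t)) atTop (𝓝 ℓ) := by
      simpa only [Function.comp_def, hrec] using hlim.comp (tendsto_add_atTop_nat 1)
    exact tendsto_nhds_unique
      (((hcont.continuousAt (isOpen_Ioi.mem_nhds hLℓ)).tendsto).comp hlim) hshift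
  exact absurd hfix (hlt ℓ hLℓ).ne

theorem demand_strictAntiOn {Y1 Y2 ρ : ℝ} (hY1 : 0 < Y1) (hY2 : 0 ≤ Y2) (hρ : 0 ≤ ρ) :
    StrictAntiOn (demand Y1 Y2 ρ) (Ioi 0) := by
  intro a (ha : 0 < a) b (hb : 0 < b) hab
  unfold demand
  have h1 : Y1 / b < Y1 / a := by gcongr
  have h2 : Y2 / (b + ρ) ≤ Y2 / (a + ρ) := by gcongr
  linarith

theorem hmap_eq_mul_demand (Y1 Y2 q1 ρ : ℝ) {x : ℝ} (hx : x ≠ 0) :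
    hmap Y1 Y2 q1 ρ x = x * demand Y1 Y2 ρ x / q1 := by
  unfold hmap demand
  rw [mul_add, mul_div_cancel₀ _ hx, mul_div_left_comm]

theorem hmap_lt_self_iff (Y1 Y2 ρ : ℝ) {q1 x : ℝ} (hq1 : 0 < q1) (hx : 0 < x) :
    hmap Y1 Y2 q1 ρ x < x ↔ demand Y1 Y2 ρ x < q1 := by
  rw [hmap_eq_mul_demand _ _ _ _ hx.ne', div_lt_iff₀ hq1, mul_lt_mul_iff_right₀ hx]

theorem hmap_strictMonoOn (Y1 : ℝ) {Y2 q1 ρ : ℝ} (hY2 : 0 < Y2) (hq1 : 0 < q1) (hρ : 0 < ρ) :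
    StrictMonoOn (hmap Y1 Y2 q1 ρ) (Ioi (-ρ)) := by
  intro a (ha : -ρ < a) b (hb : -ρ < b) hab
  have hfrac : a / (a + ρ) < b / (b + ρ) := by
    rw [div_lt_div_iff₀ (by linarith) (by linarith)]
    nlinarith
  unfold hmap
  gcongr

theorem hmap_continuousOn (Y1 Y2 q1 ρ : ℝ) : ContinuousOn (hmap Y1 Y2 q1 ρ) (Ioi (-ρ)) := by
  unfold hmap
  refine ContinuousOn.div_const (continuousOn_const.add (continuousOn_const.mul ?_)) q1
  exact continuousOn_id.div (continuousOn_id.add continuousOn_const)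
    fun x (hx : -ρ < x) => (by linarith : 0 < x + ρ).ne'

theorem p1inf_pos {Y1 q1 ρ : ℝ} (Y2 : ℝ) (hY1 : 0 < Y1) (hq1 : 0 < q1) (hρ : 0 < ρ) :
    0 < p1inf Y1 Y2 q1 ρ := by
  set b := Y1 + Y2 - ρ * q1
  have hb : |b| < √(b ^ 2 + 4 * ρ * q1 * Y1) := by
    rw [← Real.sqrt_sq_eq_abs]
    exact Real.sqrt_lt_sqrt (sq_nonneg b) (by nlinarith [mul_pos (mul_pos hρ hq1) hY1])
  unfold p1inf
  have hnb := neg_abs_le b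
  exact div_pos (by linarith) (by positivity)

theorem p1inf_isRoot {Y1 q1 ρ : ℝ} (Y2 : ℝ) (hY1 : 0 ≤ Y1) (hq1 : 0 < q1) (hρ : 0 ≤ ρ) :
    q1 * p1inf Y1 Y2 q1 ρ * (p1inf Y1 Y2 q1 ρ + ρ) =
      Y1 * (p1inf Y1 Y2 q1 ρ + ρ) + Y2 * p1inf Y1 Y2 q1 ρ := by
  have hsq := Real.sq_sqrt (by positivity : 0 ≤ (Y1 + Y2 - ρ * q1) ^ 2 + 4 * ρ * q1 * Y1)
  unfold p1inf
  set s := √((Y1 + Y2 - ρ * q1) ^ 2 + 4 * ρ * q1 * Y1)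
  field_simp
  linear_combination hsq

theorem demand_p1inf {Y1 Y2 q1 ρ : ℝ} (hY1 : 0 < Y1) (hq1 : 0 < q1) (hρ : 0 < ρ) :
    demand Y1 Y2 ρ (p1inf Y1 Y2 q1 ρ) = q1 := by
  have hL := p1inf_pos Y2 hY1 hq1 hρ
  unfold demand
  rw [div_add_div _ _ hL.ne' (by positivity), div_eq_iff (by positivity)]
  linear_combination -(p1inf_isRoot Y2 hY1.le hq1 hρ.le)

/-- Zone II-1, case I (degenerate ℓ₁-equilibrium): `p₁∞` is a positive fixed point
of `h`, for positive prices the condition `Y₁/p₀ + Y₂/(p₀+ρ) < q₁` is equivalent to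
`p₀ > p₁∞`, and every orbit of `h` started at such a `p₀` decreases strictly and
converges monotonically to `p₁∞`. -/
theorem degenerate_ell1_equilibrium (Y1 Y2 q1 ρ : ℝ)
    (hY1 : 0 < Y1) (hY2 : 0 < Y2) (hq1 : 0 < q1) (hρ : 0 < ρ) :
    0 < p1inf Y1 Y2 q1 ρ ∧
    hmap Y1 Y2 q1 ρ (p1inf Y1 Y2 q1 ρ) = p1inf Y1 Y2 q1 ρ ∧
    (∀ p0 : ℝ, 0 < p0 →
      (Y1 / p0 + Y2 / (p0 + ρ) < q1 ↔ p1inf Y1 Y2 q1 ρ < p0)) ∧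
    (∀ p : ℕ → ℝ, 0 < p 0 → Y1 / p 0 + Y2 / (p 0 + ρ) < q1 →
      (∀ t, p (t + 1) = hmap Y1 Y2 q1 ρ (p t)) →
      StrictAnti p ∧ Tendsto p atTop (nhds (p1inf Y1 Y2 q1 ρ))) := by
  set L := p1inf Y1 Y2 q1 ρ
  have hL : 0 < L := p1inf_pos Y2 hY1 hq1 hρ
  have hdemand : demand Y1 Y2 ρ L = q1 := demand_p1inf hY1 hq1 hρ
  have hfix : hmap Y1 Y2 q1 ρ L = L := by
    rw [hmap_eq_mul_demand _ _ _ _ hL.ne', hdemand, mul_div_cancel_right₀ _ hq1.ne']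
  have hequiv : ∀ x, 0 < x → (demand Y1 Y2 ρ x < q1 ↔ L < x) := fun x hx =>
    hdemand ▸ (demand_strictAntiOn hY1 hY2.le hρ.le).lt_iff_gt hx hL
  refine ⟨hL, hfix, hequiv, fun p hp0 hcond hrec => ?_⟩
  have hpos : Ioi L ⊆ Ioi 0 := Ioi_subset_Ioi hL.le
  refine strictAnti_and_tendsto_of_lt_self (f := hmap Y1 Y2 q1 ρ) ?_ ?_
    ((hmap_continuousOn Y1 Y2 q1 ρ).mono (Ioi_subset_Ioi (by linarith))) ((hequiv _ hp0).1 hcond) hrec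
  · intro x (hx : L < x)
    exact hfix ▸ hmap_strictMonoOn Y1 hY2 hq1 hρ (show -ρ < L by linarith) (show -ρ < x by linarith) hx
  · intro x (hx : L < x)
    exact (hmap_lt_self_iff Y1 Y2 ρ hq1 (hpos hx)).2 ((hequiv x (hpos hx)).2 hx)
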